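/- For n=2, any optimal choice (a_0,a_1,a_2) for minimizing \|D(a_0,a_1,a_2;\cdot)\|_\infty satisfies 0 < a_0 < 0.2, 0.4 < a_1 < 0.6, 0.8 < a_2 < 1, and additionally a_1 - a_0 < 0.4 and a_2 - a_1 < 0.4. -/

import Mathlib

/-!
The symmetric triple `(39/200, 1/2, 161/200)` keeps `D2` below `39/200` on `[0, 1]`, so an optimal
triple must satisfy `D2 a₀ a₁ a₂ p ≤ 39/200` for every `p ∈ [0, 1]`. Each such evaluation, combined
with `|x| ≥ ±x`, is a linear constraint on `(a₀, a₁, a₂)`; the points `p = 0, 1, 1/2, 1/5, 1/3` already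
force the bounds on `a₀`, the lower bound on `a₁` and the first gap. The reflection
`p ↦ 1 - p`, `(a₀, a₁, a₂) ↦ (1 - a₂, 1 - a₁, 1 - a₀)` preserves `D2` and yields the other half.
-/

/-- Penalty function for two tosses. -/
noncomputable def D2 (a₀ a₁ a₂ p : ℝ) : ℝ :=
  (1 - p)^2 * |p - a₀| + 2 * p * (1 - p) * |p - a₁| + p^2 * |p - a₂|

theorem D2_one_sub (a₀ a₁ a₂ p : ℝ) :
    D2 a₀ a₁ a₂ (1 - p) = D2 (1 - a₂) (1 - a₁) (1 - a₀) p := by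
  simp only [D2, abs_sub_comm (1 - p), show ∀ a : ℝ, a - (1 - p) = p - (1 - a) by intros; ring]
  ring

theorem forall_D2_one_sub_le {a₀ a₁ a₂ c : ℝ} (h : ∀ p ∈ Set.Icc (0:ℝ) 1, D2 a₀ a₁ a₂ p ≤ c) :
    ∀ p ∈ Set.Icc (0:ℝ) 1, D2 (1 - a₂) (1 - a₁) (1 - a₀) p ≤ c := by
  intro p hp
  rw [← D2_one_sub]
  exact h (1 - p) ⟨by linarith [hp.2], by linarith [hp.1]⟩

theorem continuous_D2 (a₀ a₁ a₂ : ℝ) : Continuous (D2 a₀ a₁ a₂) := by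
  unfold D2
  fun_prop

theorem bddAbove_D2_image_Icc (a₀ a₁ a₂ : ℝ) :
    BddAbove (D2 a₀ a₁ a₂ '' Set.Icc 0 1) :=
  isCompact_Icc.bddAbove_image (continuous_D2 a₀ a₁ a₂).continuousOn

theorem D2_candidate_le_of_le_half {p : ℝ} (hp₀ : 0 ≤ p) (hp : p ≤ 1/2) :
    D2 (39/200) (1/2) (161/200) p ≤ 39/200 := by
  rw [D2, abs_of_nonpos (by linarith : p - 1/2 ≤ 0), abs_of_nonpos (by linarith : p - 161/200 ≤ 0)]
  rcases le_total p (39/200) with hle | hge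
  · rw [abs_of_nonpos (sub_nonpos.2 hle)]
    -- on this piece `D2 = 39/200 * (1 - 2p)`, because `39/200 + 161/200 = 1`
    nlinarith
  · rw [abs_of_nonneg (sub_nonneg.2 hge)]
    -- the cubic margin `39/200 - D2` is smallest, about `0.005`, near `p = 9/25`
    nlinarith [mul_nonneg (sub_nonneg.2 hp) (sq_nonneg (p - 9/25))]

theorem D2_candidate_le {p : ℝ} (hp : p ∈ Set.Icc (0:ℝ) 1) :
    D2 (39/200) (1/2) (161/200) p ≤ 39/200 := by
  rcases le_total p (1/2) with hle | hge
  · exact D2_candidate_le_of_le_half hp.1 hle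
  · have h := D2_candidate_le_of_le_half (p := 1 - p) (by linarith [hp.2]) (by linarith)
    rw [D2_one_sub] at h
    norm_num at h
    exact h

theorem sSup_D2_candidate_le :
    sSup (D2 (39/200) (1/2) (161/200) '' Set.Icc 0 1) ≤ 39/200 :=
  Real.sSup_le (by rintro _ ⟨p, hp, rfl⟩; exact D2_candidate_le hp) (by norm_num)

theorem bounds_of_forall_D2_le {a₀ a₁ a₂ : ℝ}
    (h : ∀ p ∈ Set.Icc (0:ℝ) 1, D2 a₀ a₁ a₂ p ≤ 39/200) :
    0 < a₀ ∧ a₀ < 0.2 ∧ 0.4 < a₁ ∧ a₁ - a₀ < 0.4 := by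
  have at0 := h 0 (by norm_num)
  have at1 := h 1 (by norm_num)
  have atHalf := h (1/2) (by norm_num)
  have atFifth := h (1/5) (by norm_num)
  have atThird := h (1/3) (by norm_num)
  simp only [D2] at at0 at1 atHalf atFifth atThird
  norm_num at at0 at1 atHalf atFifth atThird
  have ha₀ : a₀ ≤ 39/200 := (le_abs_self a₀).trans at0
  have ha₂ : 161/200 ≤ a₂ := by linarith [le_abs_self (1 - a₂)]
  have ha₁ : 83/200 ≤ a₁ := by
    linarith [le_abs_self (1/2 - a₀ : ℝ), le_abs_self (1/2 - a₁ : ℝ), neg_abs_le (1/2 - a₂ : ℝ)]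
  norm_num
  refine ⟨?_, by linarith, by linarith, ?_⟩
  · linarith [le_abs_self (1/5 - a₀ : ℝ), neg_abs_le (1/5 - a₁ : ℝ), neg_abs_le (1/5 - a₂ : ℝ)]
  · linarith [le_abs_self (1/3 - a₀ : ℝ), neg_abs_le (1/3 - a₁ : ℝ), neg_abs_le (1/3 - a₂ : ℝ)]

theorem stmt_15_general (a₀ a₁ a₂ : ℝ)
    (hopt : ∀ b₀ ∈ Set.Icc (0:ℝ) 1, ∀ b₁ ∈ Set.Icc (0:ℝ) 1, ∀ b₂ ∈ Set.Icc (0:ℝ) 1,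
      sSup ((fun p => D2 a₀ a₁ a₂ p) '' Set.Icc (0:ℝ) 1) ≤
        sSup ((fun p => D2 b₀ b₁ b₂ p) '' Set.Icc (0:ℝ) 1)) :
    0 < a₀ ∧ a₀ < 0.2 ∧ 0.4 < a₁ ∧ a₁ < 0.6 ∧ 0.8 < a₂ ∧ a₂ < 1 ∧
      a₁ - a₀ < 0.4 ∧ a₂ - a₁ < 0.4 := by
  have hsup : sSup (D2 a₀ a₁ a₂ '' Set.Icc 0 1) ≤ 39/200 :=
    (hopt _ (by norm_num) _ (by norm_num) _ (by norm_num)).trans sSup_D2_candidate_le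
  have hD2 : ∀ p ∈ Set.Icc (0:ℝ) 1, D2 a₀ a₁ a₂ p ≤ 39/200 := fun p hp =>
    (le_csSup (bddAbove_D2_image_Icc a₀ a₁ a₂) (Set.mem_image_of_mem _ hp)).trans hsup
  obtain ⟨h₀, h₀', h₁, h₀₁⟩ := bounds_of_forall_D2_le hD2
  obtain ⟨h₂, h₂', h₁', h₁₂⟩ := bounds_of_forall_D2_le (forall_D2_one_sub_le hD2)
  norm_num at h₀' h₁ h₀₁ h₂ h₂' h₁' h₁₂ ⊢
  exact ⟨h₀, h₀', h₁, by linarith, by linarith, by linarith, h₀₁, by linarith⟩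

theorem stmt_15 (a₀ a₁ a₂ : ℝ)
    (hmem : a₀ ∈ Set.Icc (0:ℝ) 1 ∧ a₁ ∈ Set.Icc (0:ℝ) 1 ∧ a₂ ∈ Set.Icc (0:ℝ) 1)
    (hopt : ∀ b₀ ∈ Set.Icc (0:ℝ) 1, ∀ b₁ ∈ Set.Icc (0:ℝ) 1, ∀ b₂ ∈ Set.Icc (0:ℝ) 1,
      sSup ((fun p => D2 a₀ a₁ a₂ p) '' Set.Icc (0:ℝ) 1) ≤
        sSup ((fun p => D2 b₀ b₁ b₂ p) '' Set.Icc (0:ℝ) 1)) :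
    0 < a₀ ∧ a₀ < 0.2 ∧ 0.4 < a₁ ∧ a₁ < 0.6 ∧ 0.8 < a₂ ∧ a₂ < 1 ∧
      a₁ - a₀ < 0.4 ∧ a₂ - a₁ < 0.4 :=
  stmt_15_general a₀ a₁ a₂ hopt
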